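/- arXiv:1812.06215 — 3 statements merged into one kernel-verified Lean document; each statement's English description precedes it below -/
import Mathlib

section
/- Let f1, f2, g be continuously differentiable real-valued functions on [0, L] with f1' > 0, f2' > 0, g > 0 on [0, L], and f1(0) = f2(0). If for every nonnegative integer n, ∫₀ᴸ f1(s)ⁿ g(s) ds = ∫₀ᴸ f2(s)ⁿ g(s) ds, then f1 = f2 on [0, L]. -/
open intervalIntegral Set

/-- Auxiliary: from equality of integrals against all continuous test functions,
strict monotonicity, and equal starting values, derive a contradiction from a
point where `f1 < f2`. -/
private lemma moment_aux (L : ℝ) (hL : 0 < L)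
    (f1 f2 g : ℝ → ℝ)
    (hc1 : ContinuousOn f1 (Set.Icc 0 L))
    (hc2 : ContinuousOn f2 (Set.Icc 0 L))
    (hg : ContinuousOn g (Set.Icc 0 L))
    (hm1 : StrictMonoOn f1 (Set.Icc 0 L))
    (hm2 : StrictMonoOn f2 (Set.Icc 0 L))
    (hgpos : ∀ s ∈ Set.Icc (0:ℝ) L, 0 < g s)
    (h0 : f1 0 = f2 0)
    (hcont : ∀ φ : ℝ → ℝ, Continuous φ →
      ∫ s in (0:ℝ)..L, φ (f1 s) * g s = ∫ s in (0:ℝ)..L, φ (f2 s) * g s)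
    (s0 : ℝ) (hs0 : s0 ∈ Set.Icc (0:ℝ) L) (hlt : f1 s0 < f2 s0) : False := by
  have h0mem : (0:ℝ) ∈ Set.Icc (0:ℝ) L := ⟨le_refl 0, hL.le⟩
  -- integrability helper
  have hInt : ∀ h : ℝ → ℝ, ContinuousOn h (Set.Icc 0 L) → ∀ a b : ℝ, 0 ≤ a → a ≤ b → b ≤ L →
      IntervalIntegrable h MeasureTheory.volume a b := by
    intro h hh a b ha hab hbL
    exact (hh.mono (by rw [Set.uIcc_of_le hab]; exact Set.Icc_subset_Icc ha hbL)).intervalIntegrable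
  have hs0pos : 0 < s0 := by
    rcases hs0.1.lt_or_eq with h | h
    · exact h
    · exact absurd hlt (by rw [← h, h0, lt_self_iff_false]; exact not_false)
  set t := f1 s0 with ht_def
  have ht0 : f2 0 ≤ t := by
    rw [← h0]; exact hm1.monotoneOn h0mem hs0 hs0.1
  -- inverse point σ for f2 at level t
  obtain ⟨σ, hσmem, hσ⟩ : ∃ σ ∈ Set.Icc (0:ℝ) s0, f2 σ = t := by
    have := intermediate_value_Icc hs0.1 (hc2.mono (Set.Icc_subset_Icc le_rfl hs0.2))
    obtain ⟨σ, hσmem, hσ⟩ := this ⟨ht0, hlt.le⟩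
    exact ⟨σ, hσmem, hσ⟩
  have hσIcc : σ ∈ Set.Icc (0:ℝ) L := ⟨hσmem.1, hσmem.2.trans hs0.2⟩
  have hσlt : σ < s0 := by
    rcases hσmem.2.lt_or_eq with h | h
    · exact h
    · exact absurd hlt (by rw [← hσ, h]; exact lt_irrefl _)
  set s1 := (σ + s0) / 2 with hs1_def
  have hσs1 : σ < s1 := by rw [hs1_def]; linarith
  have hs1s0 : s1 < s0 := by rw [hs1_def]; linarith
  have hs1Icc : s1 ∈ Set.Icc (0:ℝ) L := ⟨le_trans hσmem.1 hσs1.le, le_trans hs1s0.le hs0.2⟩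
  set ε := f2 s1 - t with hε_def
  have hε : 0 < ε := by
    have := hm2 hσIcc hs1Icc hσs1
    rw [hε_def, ← hσ]; linarith
  have hf2s1 : f2 s1 = t + ε := by rw [hε_def]; ring
  -- test function
  set φ : ℝ → ℝ := fun x => max 0 (min 1 ((t + ε - x) / ε)) with hφ_def
  have hφc : Continuous φ := by
    apply continuous_const.max
    apply continuous_const.min
    exact (continuous_const.sub continuous_id).div_const ε
  have hφ1 : ∀ x : ℝ, x ≤ t → φ x = 1 := by
    intro x hx
    have h1 : (1:ℝ) ≤ (t + ε - x) / ε := by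
      rw [le_div_iff₀ hε]; linarith
    rw [hφ_def]; simp only [min_eq_left h1, max_eq_right (by norm_num : (0:ℝ) ≤ 1)]
  have hφ0 : ∀ x : ℝ, t + ε ≤ x → φ x = 0 := by
    intro x hx
    have h1 : (t + ε - x) / ε ≤ 0 := div_nonpos_of_nonpos_of_nonneg (by linarith) hε.le
    rw [hφ_def]
    simp only [max_eq_left (le_trans (min_le_right _ _) h1)]
  have hφnn : ∀ x : ℝ, 0 ≤ φ x := fun x => le_max_left _ _
  have hφle1 : ∀ x : ℝ, φ x ≤ 1 := fun x => max_le (by norm_num) (min_le_left _ _)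
  -- continuity of integrands
  have hcφ1 : ContinuousOn (fun s => φ (f1 s) * g s) (Set.Icc 0 L) :=
    ((hφc.comp_continuousOn hc1).mul hg)
  have hcφ2 : ContinuousOn (fun s => φ (f2 s) * g s) (Set.Icc 0 L) :=
    ((hφc.comp_continuousOn hc2).mul hg)
  -- lower bound for ∫ φ(f1) g
  have hlow : (∫ s in (0:ℝ)..s0, g s) ≤ ∫ s in (0:ℝ)..L, φ (f1 s) * g s := by
    have hsplit : (∫ s in (0:ℝ)..s0, φ (f1 s) * g s) + ∫ s in s0..L, φ (f1 s) * g s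
        = ∫ s in (0:ℝ)..L, φ (f1 s) * g s :=
      integral_add_adjacent_intervals (hInt _ hcφ1 0 s0 le_rfl hs0.1 hs0.2)
        (hInt _ hcφ1 s0 L hs0.1 hs0.2 le_rfl)
    have h1 : (∫ s in (0:ℝ)..s0, φ (f1 s) * g s) = ∫ s in (0:ℝ)..s0, g s := by
      apply integral_congr
      intro s hs
      rw [Set.uIcc_of_le hs0.1] at hs
      have hsIcc : s ∈ Set.Icc (0:ℝ) L := ⟨hs.1, hs.2.trans hs0.2⟩
      have : f1 s ≤ t := hm1.monotoneOn hsIcc hs0 hs.2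
      show φ (f1 s) * g s = g s
      rw [hφ1 _ this, one_mul]
    have h2 : (0:ℝ) ≤ ∫ s in s0..L, φ (f1 s) * g s := by
      apply integral_nonneg hs0.2
      intro s hs
      exact mul_nonneg (hφnn _) (hgpos s ⟨hs0.1.trans hs.1, hs.2⟩).le
    linarith
  -- upper bound for ∫ φ(f2) g
  have hup : (∫ s in (0:ℝ)..L, φ (f2 s) * g s) ≤ ∫ s in (0:ℝ)..s1, g s := by
    have hsplit : (∫ s in (0:ℝ)..s1, φ (f2 s) * g s) + ∫ s in s1..L, φ (f2 s) * g s
        = ∫ s in (0:ℝ)..L, φ (f2 s) * g s :=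
      integral_add_adjacent_intervals (hInt _ hcφ2 0 s1 le_rfl hs1Icc.1 hs1Icc.2)
        (hInt _ hcφ2 s1 L hs1Icc.1 hs1Icc.2 le_rfl)
    have h1 : (∫ s in (0:ℝ)..s1, φ (f2 s) * g s) ≤ ∫ s in (0:ℝ)..s1, g s := by
      apply integral_mono_on hs1Icc.1 (hInt _ hcφ2 0 s1 le_rfl hs1Icc.1 hs1Icc.2)
        (hInt _ hg 0 s1 le_rfl hs1Icc.1 hs1Icc.2)
      intro s hs
      have hsIcc : s ∈ Set.Icc (0:ℝ) L := ⟨hs.1, hs.2.trans hs1Icc.2⟩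
      calc φ (f2 s) * g s ≤ 1 * g s :=
            mul_le_mul_of_nonneg_right (hφle1 _) (hgpos s hsIcc).le
        _ = g s := one_mul _
    have h2 : (∫ s in s1..L, φ (f2 s) * g s) = 0 := by
      have : (∫ s in s1..L, φ (f2 s) * g s) = ∫ s in s1..L, (0:ℝ) := by
        apply integral_congr
        intro s hs
        rw [Set.uIcc_of_le hs1Icc.2] at hs
        have hsIcc : s ∈ Set.Icc (0:ℝ) L := ⟨hs1Icc.1.trans hs.1, hs.2⟩
        have : t + ε ≤ f2 s := by
          rw [← hf2s1]; exact hm2.monotoneOn hs1Icc hsIcc hs.1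
        show φ (f2 s) * g s = 0
        rw [hφ0 _ this, zero_mul]
      rw [this, integral_zero]
    linarith
  -- combine
  have hkey := hcont φ hφc
  have hcomb : (∫ s in (0:ℝ)..s0, g s) ≤ ∫ s in (0:ℝ)..s1, g s := by linarith
  have hsplitg : (∫ s in (0:ℝ)..s1, g s) + ∫ s in s1..s0, g s = ∫ s in (0:ℝ)..s0, g s :=
    integral_add_adjacent_intervals (hInt _ hg 0 s1 le_rfl hs1Icc.1 hs1Icc.2)
      (hInt _ hg s1 s0 hs1Icc.1 hs1s0.le hs0.2)
  have hposint : 0 < ∫ s in s1..s0, g s := by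
    apply intervalIntegral_pos_of_pos_on (hInt _ hg s1 s0 hs1Icc.1 hs1s0.le hs0.2)
    · intro x hx
      exact hgpos x ⟨hs1Icc.1.trans hx.1.le, hx.2.le.trans hs0.2⟩
    · exact hs1s0
  linarith

/-- Moment lemma (Lemma 4.1): if `f1, f2, g` are C¹ on `[0, L]` with `f1' > 0`,
`f2' > 0`, `g > 0` and `f1 0 = f2 0`, and all moments of `f1` and `f2` against `g`
agree, then `f1 = f2` on `[0, L]`. -/
theorem moment_lemma (L : ℝ) (hL : 0 < L)
    (f1 f2 g f1' f2' : ℝ → ℝ)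
    (hf1 : ∀ s ∈ Set.Icc (0:ℝ) L, HasDerivAt f1 (f1' s) s)
    (hf2 : ∀ s ∈ Set.Icc (0:ℝ) L, HasDerivAt f2 (f2' s) s)
    (hf1' : ContinuousOn f1' (Set.Icc 0 L))
    (hf2' : ContinuousOn f2' (Set.Icc 0 L))
    (hg : ContinuousOn g (Set.Icc 0 L))
    (hf1pos : ∀ s ∈ Set.Icc (0:ℝ) L, 0 < f1' s)
    (hf2pos : ∀ s ∈ Set.Icc (0:ℝ) L, 0 < f2' s)
    (hgpos : ∀ s ∈ Set.Icc (0:ℝ) L, 0 < g s)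
    (h0 : f1 0 = f2 0)
    (hmom : ∀ n : ℕ, ∫ s in (0:ℝ)..L, (f1 s) ^ n * g s = ∫ s in (0:ℝ)..L, (f2 s) ^ n * g s) :
    ∀ s ∈ Set.Icc (0:ℝ) L, f1 s = f2 s := by
  have h0mem : (0:ℝ) ∈ Set.Icc (0:ℝ) L := ⟨le_refl 0, hL.le⟩
  have hLmem : L ∈ Set.Icc (0:ℝ) L := ⟨hL.le, le_refl L⟩
  have hc1 : ContinuousOn f1 (Set.Icc 0 L) :=
    fun s hs => (hf1 s hs).continuousAt.continuousWithinAt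
  have hc2 : ContinuousOn f2 (Set.Icc 0 L) :=
    fun s hs => (hf2 s hs).continuousAt.continuousWithinAt
  have hm1 : StrictMonoOn f1 (Set.Icc 0 L) := by
    apply strictMonoOn_of_deriv_pos (convex_Icc 0 L) hc1
    intro x hx
    rw [interior_Icc] at hx
    have hx' : x ∈ Set.Icc (0:ℝ) L := Set.Ioo_subset_Icc_self hx
    rw [(hf1 x hx').deriv]
    exact hf1pos x hx'
  have hm2 : StrictMonoOn f2 (Set.Icc 0 L) := by
    apply strictMonoOn_of_deriv_pos (convex_Icc 0 L) hc2
    intro x hx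
    rw [interior_Icc] at hx
    have hx' : x ∈ Set.Icc (0:ℝ) L := Set.Ioo_subset_Icc_self hx
    rw [(hf2 x hx').deriv]
    exact hf2pos x hx'
  have hInt : ∀ h : ℝ → ℝ, ContinuousOn h (Set.Icc 0 L) →
      IntervalIntegrable h MeasureTheory.volume 0 L := by
    intro h hh
    exact (hh.mono (by rw [Set.uIcc_of_le hL.le])).intervalIntegrable
  -- Step 1: polynomial moments agree
  have hpoly : ∀ p : Polynomial ℝ,
      ∫ s in (0:ℝ)..L, p.eval (f1 s) * g s = ∫ s in (0:ℝ)..L, p.eval (f2 s) * g s := by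
    intro p
    have hrw : ∀ (f : ℝ → ℝ), (fun s => p.eval (f s) * g s)
        = fun s => ∑ i ∈ Finset.range (p.natDegree + 1), p.coeff i * (f s ^ i * g s) := by
      intro f
      funext s
      rw [Polynomial.eval_eq_sum_range, Finset.sum_mul]
      congr 1
      funext i
      ring
    have hintf : ∀ (f : ℝ → ℝ), ContinuousOn f (Set.Icc 0 L) →
        ∀ i : ℕ, IntervalIntegrable (fun s => p.coeff i * (f s ^ i * g s))
          MeasureTheory.volume 0 L := by
      intro f hf i
      exact hInt _ (((hf.pow i).mul hg).const_smul (p.coeff i))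
    calc ∫ s in (0:ℝ)..L, p.eval (f1 s) * g s
        = ∑ i ∈ Finset.range (p.natDegree + 1),
            ∫ s in (0:ℝ)..L, p.coeff i * (f1 s ^ i * g s) := by
          rw [hrw f1]
          exact integral_finset_sum fun i _ => hintf f1 hc1 i
      _ = ∑ i ∈ Finset.range (p.natDegree + 1),
            ∫ s in (0:ℝ)..L, p.coeff i * (f2 s ^ i * g s) := by
          apply Finset.sum_congr rfl
          intro i _
          rw [integral_const_mul, integral_const_mul, hmom i]
      _ = ∫ s in (0:ℝ)..L, p.eval (f2 s) * g s := by
          rw [hrw f2]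
          exact (integral_finset_sum fun i _ => hintf f2 hc2 i).symm
  -- Step 2: continuous test functions agree
  have hcont : ∀ φ : ℝ → ℝ, Continuous φ →
      ∫ s in (0:ℝ)..L, φ (f1 s) * g s = ∫ s in (0:ℝ)..L, φ (f2 s) * g s := by
    intro φ hφ
    set m := f1 0 with hm_def
    set M := max (f1 L) (f2 L) with hM_def
    have hr1 : ∀ s ∈ Set.Icc (0:ℝ) L, f1 s ∈ Set.Icc m M := by
      intro s hs
      exact ⟨hm1.monotoneOn h0mem hs hs.1, le_trans (hm1.monotoneOn hs hLmem hs.2) (le_max_left _ _)⟩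
    have hr2 : ∀ s ∈ Set.Icc (0:ℝ) L, f2 s ∈ Set.Icc m M := by
      intro s hs
      refine ⟨?_, le_trans (hm2.monotoneOn hs hLmem hs.2) (le_max_right _ _)⟩
      show f1 0 ≤ f2 s
      rw [← hm_def, h0]
      exact hm2.monotoneOn h0mem hs hs.1
    have hgint : IntervalIntegrable g MeasureTheory.volume 0 L := hInt _ hg
    have hgnn : 0 ≤ ∫ s in (0:ℝ)..L, g s :=
      integral_nonneg hL.le (fun s hs => (hgpos s hs).le)
    set C := ∫ s in (0:ℝ)..L, g s with hC_def
    have hbound : ∀ ε : ℝ, 0 < ε →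
        |(∫ s in (0:ℝ)..L, φ (f1 s) * g s) - ∫ s in (0:ℝ)..L, φ (f2 s) * g s| ≤ 2 * ε * C := by
      intro ε hε
      obtain ⟨p, hp⟩ := exists_polynomial_near_of_continuousOn m M φ hφ.continuousOn ε hε
      have key : ∀ (f : ℝ → ℝ), ContinuousOn f (Set.Icc 0 L) →
          (∀ s ∈ Set.Icc (0:ℝ) L, f s ∈ Set.Icc m M) →
          |(∫ s in (0:ℝ)..L, φ (f s) * g s) - ∫ s in (0:ℝ)..L, p.eval (f s) * g s| ≤ ε * C := by
        intro f hf hr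
        have hintφ : IntervalIntegrable (fun s => φ (f s) * g s) MeasureTheory.volume 0 L :=
          hInt _ ((hφ.comp_continuousOn hf).mul hg)
        have hintp : IntervalIntegrable (fun s => p.eval (f s) * g s) MeasureTheory.volume 0 L :=
          hInt _ (((p.continuous.comp_continuousOn hf)).mul hg)
        have hsub : (∫ s in (0:ℝ)..L, φ (f s) * g s) - (∫ s in (0:ℝ)..L, p.eval (f s) * g s)
            = ∫ s in (0:ℝ)..L, (φ (f s) - p.eval (f s)) * g s := by
          rw [← integral_sub hintφ hintp]
          congr 1; funext s; ring
        rw [hsub]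
        have habs := abs_integral_le_integral_abs (μ := MeasureTheory.volume)
          (f := fun s => (φ (f s) - p.eval (f s)) * g s) hL.le
        refine le_trans habs ?_
        have : (∫ s in (0:ℝ)..L, |(φ (f s) - p.eval (f s)) * g s|) ≤ ∫ s in (0:ℝ)..L, ε * g s := by
          apply integral_mono_on hL.le
          · exact hInt _ (((hφ.comp_continuousOn hf).sub
              (p.continuous.comp_continuousOn hf)).mul hg).abs
          · exact hInt _ (hg.const_smul ε)
          · intro s hs
            rw [abs_mul, abs_of_nonneg (hgpos s hs).le]
            apply mul_le_mul_of_nonneg_right _ (hgpos s hs).le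
            rw [abs_sub_comm]
            exact (hp _ (hr s hs)).le
        refine le_trans this ?_
        rw [integral_const_mul]
      have h1 := key f1 hc1 hr1
      have h2 := key f2 hc2 hr2
      have h3 := hpoly p
      have htri : |(∫ s in (0:ℝ)..L, φ (f1 s) * g s) - ∫ s in (0:ℝ)..L, φ (f2 s) * g s|
          ≤ |(∫ s in (0:ℝ)..L, φ (f1 s) * g s) - ∫ s in (0:ℝ)..L, p.eval (f1 s) * g s|
            + |(∫ s in (0:ℝ)..L, p.eval (f1 s) * g s) - ∫ s in (0:ℝ)..L, φ (f2 s) * g s| :=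
        abs_sub_le _ _ _
      have h2' : |(∫ s in (0:ℝ)..L, p.eval (f1 s) * g s) - ∫ s in (0:ℝ)..L, φ (f2 s) * g s|
          ≤ ε * C := by
        rw [h3, abs_sub_comm]
        exact h2
      linarith
    -- conclude equality
    by_contra hne
    have habs : 0 < |(∫ s in (0:ℝ)..L, φ (f1 s) * g s) - ∫ s in (0:ℝ)..L, φ (f2 s) * g s| :=
      abs_pos.mpr (sub_ne_zero.mpr hne)
    set D := |(∫ s in (0:ℝ)..L, φ (f1 s) * g s) - ∫ s in (0:ℝ)..L, φ (f2 s) * g s| with hD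
    have := hbound (D / (2 * C + 1)) (by positivity)
    have h2C : 2 * (D / (2 * C + 1)) * C < D := by
      have hd : 2 * (D / (2 * C + 1)) * C = D * (2 * C) / (2 * C + 1) := by ring
      rw [hd, div_lt_iff₀ (by positivity)]
      nlinarith
    linarith
  -- Step 3: conclude
  intro s hs
  by_contra hne
  rcases lt_or_gt_of_ne hne with h | h
  · exact moment_aux L hL f1 f2 g hc1 hc2 hg hm1 hm2 hgpos h0 hcont s hs h
  · exact moment_aux L hL f2 f1 g hc2 hc1 hg hm2 hm1 hgpos h0.symm
      (fun φ hφ => (hcont φ hφ).symm) s hs h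
end

section
/- Let f1, f2, g be continuous real-valued functions on [0, L] with f1 strictly increasing, f2 strictly increasing, g strictly positive on [0, L], and f1(0) = f2(0) = 0. If ∫₀ᴸ f1(s)ⁿ g(s) ds = ∫₀ᴸ f2(s)ⁿ g(s) ds for all nonnegative integers n, then f1(L) = f2(L). -/
open intervalIntegral

lemma moment_endpoint_aux (L : ℝ) (hL : 0 < L)
    (f1 f2 g : ℝ → ℝ)
    (hf1c : ContinuousOn f1 (Set.Icc 0 L))
    (hf2c : ContinuousOn f2 (Set.Icc 0 L))
    (hgc : ContinuousOn g (Set.Icc 0 L))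
    (hf1mono : StrictMonoOn f1 (Set.Icc 0 L))
    (hf2mono : StrictMonoOn f2 (Set.Icc 0 L))
    (hgpos : ∀ s ∈ Set.Icc (0:ℝ) L, 0 < g s)
    (h10 : f1 0 = 0) (h20 : f2 0 = 0)
    (hmom : ∀ n : ℕ, ∫ s in (0:ℝ)..L, (f1 s) ^ n * g s = ∫ s in (0:ℝ)..L, (f2 s) ^ n * g s) :
    f1 L ≤ f2 L := by
  by_contra hcon
  push_neg at hcon
  have h0mem : (0:ℝ) ∈ Set.Icc (0:ℝ) L := ⟨le_refl 0, hL.le⟩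
  have hLmem : L ∈ Set.Icc (0:ℝ) L := ⟨hL.le, le_refl L⟩
  have hM : 0 < f2 L := by
    have := hf2mono h0mem hLmem hL
    linarith [h20 ▸ this]
  set c : ℝ := (f2 L + f1 L) / 2 with hc_def
  have hc1 : f2 L < c := by rw [hc_def]; linarith
  have hc2 : c < f1 L := by rw [hc_def]; linarith
  have hcpos : 0 < c := lt_trans hM hc1
  -- continuity of f1 at L: find δ
  obtain ⟨δ, hδpos, hδ⟩ := Metric.continuousWithinAt_iff.mp (hf1c L hLmem) (f1 L - c) (by linarith)
  set a : ℝ := max (L - δ/2) 0 with ha_def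
  have ha0 : 0 ≤ a := le_max_right _ _
  have haL : a < L := max_lt (by linarith) hL
  have hsub : Set.Icc a L ⊆ Set.Icc 0 L := Set.Icc_subset_Icc ha0 (le_refl L)
  have hfa : ∀ s ∈ Set.Icc a L, c ≤ f1 s := by
    intro s hs
    have hsIcc : s ∈ Set.Icc (0:ℝ) L := hsub hs
    have hd : dist s L < δ := by
      rw [Real.dist_eq, abs_of_nonpos (by linarith [hs.2])]
      have hle : L - δ/2 ≤ a := le_max_left _ _
      linarith [hs.1]
    have := hδ hsIcc hd
    rw [Real.dist_eq] at this
    have h' := abs_lt.mp this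
    linarith [h'.1]
  -- nonnegativity of f1
  have hf1nonneg : ∀ s ∈ Set.Icc (0:ℝ) L, 0 ≤ f1 s := by
    intro s hs
    rcases eq_or_lt_of_le hs.1 with h | h
    · rw [← h, h10]
    · have := hf1mono h0mem hs h
      linarith [h10 ▸ this]
  have hf2le : ∀ s ∈ Set.Icc (0:ℝ) L, f2 s ≤ f2 L := by
    intro s hs
    rcases eq_or_lt_of_le hs.2 with h | h
    · rw [h]
    · exact le_of_lt (hf2mono hs hLmem h)
  -- integrability facts
  have huIcc : Set.uIcc (0:ℝ) L = Set.Icc 0 L := Set.uIcc_of_le hL.le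
  have huIcc2 : Set.uIcc a L = Set.Icc a L := Set.uIcc_of_le haL.le
  have huIcc3 : Set.uIcc (0:ℝ) a = Set.Icc 0 a := Set.uIcc_of_le ha0
  have hsub2 : Set.Icc (0:ℝ) a ⊆ Set.Icc 0 L := Set.Icc_subset_Icc (le_refl 0) haL.le
  have hcont1 : ∀ n : ℕ, ContinuousOn (fun s => (f1 s) ^ n * g s) (Set.Icc 0 L) :=
    fun n => (hf1c.pow n).mul hgc
  have hcont2 : ∀ n : ℕ, ContinuousOn (fun s => (f2 s) ^ n * g s) (Set.Icc 0 L) :=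
    fun n => (hf2c.pow n).mul hgc
  have hint1 : ∀ n : ℕ, IntervalIntegrable (fun s => (f1 s) ^ n * g s) MeasureTheory.volume 0 L :=
    fun n => ((hcont1 n).mono huIcc.subset).intervalIntegrable
  have hint2 : ∀ n : ℕ, IntervalIntegrable (fun s => (f2 s) ^ n * g s) MeasureTheory.volume 0 L :=
    fun n => ((hcont2 n).mono huIcc.subset).intervalIntegrable
  have hint1a : ∀ n : ℕ, IntervalIntegrable (fun s => (f1 s) ^ n * g s) MeasureTheory.volume 0 a :=
    fun n => (((hcont1 n).mono hsub2).mono huIcc3.subset).intervalIntegrable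
  have hint1aL : ∀ n : ℕ, IntervalIntegrable (fun s => (f1 s) ^ n * g s) MeasureTheory.volume a L :=
    fun n => (((hcont1 n).mono hsub).mono huIcc2.subset).intervalIntegrable
  have hintg : IntervalIntegrable g MeasureTheory.volume 0 L :=
    (hgc.mono huIcc.subset).intervalIntegrable
  have hintgaL : IntervalIntegrable g MeasureTheory.volume a L :=
    ((hgc.mono hsub).mono huIcc2.subset).intervalIntegrable
  -- positive mass near L
  set Ga : ℝ := ∫ s in a..L, g s with hGa_def
  set G : ℝ := ∫ s in (0:ℝ)..L, g s with hG_def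
  have hGapos : 0 < Ga :=
    intervalIntegral.intervalIntegral_pos_of_pos_on hintgaL
      (fun x hx => hgpos x (hsub ⟨hx.1.le, hx.2.le⟩)) haL
  have hGpos : 0 < G :=
    intervalIntegral.intervalIntegral_pos_of_pos_on hintg
      (fun x hx => hgpos x ⟨hx.1.le, hx.2.le⟩) hL
  -- choose n large
  obtain ⟨n, hn⟩ := pow_unbounded_of_one_lt (G / Ga) ((one_lt_div hM).mpr hc1)
  -- upper bound on f2 moment
  have hub : (∫ s in (0:ℝ)..L, (f2 s) ^ n * g s) ≤ (f2 L) ^ n * G := by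
    rw [hG_def, ← intervalIntegral.integral_const_mul]
    apply intervalIntegral.integral_mono_on hL.le (hint2 n)
      ((hgc.mono huIcc.subset).intervalIntegrable.const_mul _)
    intro x hx
    have hgx := (hgpos x hx).le
    have h2x : 0 ≤ f2 x := by
      rcases eq_or_lt_of_le hx.1 with h | h
      · rw [← h, h20]
      · linarith [h20 ▸ hf2mono h0mem hx h]
    exact mul_le_mul_of_nonneg_right (pow_le_pow_left₀ h2x (hf2le x hx) n) hgx
  -- lower bound on f1 moment
  have hlb1 : c ^ n * Ga ≤ ∫ s in a..L, (f1 s) ^ n * g s := by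
    rw [hGa_def, ← intervalIntegral.integral_const_mul]
    apply intervalIntegral.integral_mono_on haL.le
      (((hgc.mono hsub).mono huIcc2.subset).intervalIntegrable.const_mul _) (hint1aL n)
    intro x hx
    have hgx := (hgpos x (hsub hx)).le
    exact mul_le_mul_of_nonneg_right (pow_le_pow_left₀ hcpos.le (hfa x hx) n) hgx
  have hlb2 : (0:ℝ) ≤ ∫ s in (0:ℝ)..a, (f1 s) ^ n * g s := by
    apply intervalIntegral.integral_nonneg ha0
    intro u hu
    have huIcc' : u ∈ Set.Icc (0:ℝ) L := hsub2 hu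
    exact mul_nonneg (pow_nonneg (hf1nonneg u huIcc') n) (hgpos u huIcc').le
  have hsplit : (∫ s in (0:ℝ)..a, (f1 s) ^ n * g s) + (∫ s in a..L, (f1 s) ^ n * g s)
      = ∫ s in (0:ℝ)..L, (f1 s) ^ n * g s :=
    intervalIntegral.integral_add_adjacent_intervals (hint1a n) (hint1aL n)
  -- contradiction
  have hkey : c ^ n * Ga ≤ (f2 L) ^ n * G := by
    calc c ^ n * Ga ≤ ∫ s in a..L, (f1 s) ^ n * g s := hlb1
    _ ≤ ∫ s in (0:ℝ)..L, (f1 s) ^ n * g s := by linarith [hsplit]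
    _ = ∫ s in (0:ℝ)..L, (f2 s) ^ n * g s := hmom n
    _ ≤ (f2 L) ^ n * G := hub
  have hMn : (0:ℝ) < (f2 L) ^ n := pow_pos hM n
  rw [div_pow, div_lt_div_iff₀ hGapos hMn] at hn
  nlinarith [hkey, hn]

/-- First step of the moment lemma: equality of all moments forces the
endpoint values to agree. -/
theorem moment_endpoint (L : ℝ) (hL : 0 < L)
    (f1 f2 g : ℝ → ℝ)
    (hf1c : ContinuousOn f1 (Set.Icc 0 L))
    (hf2c : ContinuousOn f2 (Set.Icc 0 L))
    (hgc : ContinuousOn g (Set.Icc 0 L))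
    (hf1mono : StrictMonoOn f1 (Set.Icc 0 L))
    (hf2mono : StrictMonoOn f2 (Set.Icc 0 L))
    (hgpos : ∀ s ∈ Set.Icc (0:ℝ) L, 0 < g s)
    (h10 : f1 0 = 0) (h20 : f2 0 = 0)
    (hmom : ∀ n : ℕ, ∫ s in (0:ℝ)..L, (f1 s) ^ n * g s = ∫ s in (0:ℝ)..L, (f2 s) ^ n * g s) :
    f1 L = f2 L := by
  have h1 := moment_endpoint_aux L hL f1 f2 g hf1c hf2c hgc hf1mono hf2mono hgpos h10 h20 hmom
  have h2 := moment_endpoint_aux L hL f2 f1 g hf2c hf1c hgc hf2mono hf1mono hgpos h20 h10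
    (fun n => (hmom n).symm)
  linarith
end

section
/- Let a, b : [0, T₀] → ℝ³ be C¹ orbit functions with a(0) = b(0) = 0 and |aⱼ'(t)| < 1, |bⱼ'(t)| < 1 for each component j = 1, 2, 3 and all t ∈ [0, T₀]. Let g : [0, T₀] → ℝ be continuous with g > 0 on (0, T₀). If for every unit vector d ∈ {(1,0,0), (0,1,0), (0,0,1)} and every nonnegative integer n, ∫₀^{T₀} (d·a(t) + t)ⁿ g(t) dt = ∫₀^{T₀} (d·b(t) + t)ⁿ g(t) dt, then a(t) = b(t) for all t ∈ [0, T₀]. -/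
open Set MeasureTheory intervalIntegral

lemma integ_aux {T₀ : ℝ} (hT₀ : 0 < T₀) {f g : ℝ → ℝ}
    (hf : ContinuousOn f (Icc 0 T₀)) (hg : ContinuousOn g (Icc 0 T₀)) :
    IntervalIntegrable (fun t => f t * g t) volume 0 T₀ := by
  apply ContinuousOn.intervalIntegrable
  rw [uIcc_of_le hT₀.le]
  exact hf.mul hg

lemma poly_mom {T₀ : ℝ} (hT₀ : 0 < T₀) {f1 f2 g : ℝ → ℝ}
    (hf1 : ContinuousOn f1 (Icc 0 T₀)) (hf2 : ContinuousOn f2 (Icc 0 T₀))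
    (hg : ContinuousOn g (Icc 0 T₀))
    (hmom : ∀ n : ℕ, ∫ t in (0:ℝ)..T₀, f1 t ^ n * g t = ∫ t in (0:ℝ)..T₀, f2 t ^ n * g t)
    (p : Polynomial ℝ) :
    ∫ t in (0:ℝ)..T₀, p.eval (f1 t) * g t = ∫ t in (0:ℝ)..T₀, p.eval (f2 t) * g t := by
  induction p using Polynomial.induction_on' with
  | add p q hp hq =>
    have i1 : ∀ (r : Polynomial ℝ) (f : ℝ → ℝ), ContinuousOn f (Icc 0 T₀) →
        IntervalIntegrable (fun t => r.eval (f t) * g t) volume 0 T₀ := fun r f hf =>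
      integ_aux hT₀ (r.continuous_aeval.comp_continuousOn hf) hg
    simp only [Polynomial.eval_add, add_mul]
    rw [integral_add (i1 p f1 hf1) (i1 q f1 hf1), integral_add (i1 p f2 hf2) (i1 q f2 hf2),
      hp, hq]
  | monomial n c =>
    simp only [Polynomial.eval_monomial, mul_assoc]
    rw [intervalIntegral.integral_const_mul, intervalIntegral.integral_const_mul, hmom n]

lemma cont_mom {T₀ C : ℝ} (hT₀ : 0 < T₀) {f1 f2 g : ℝ → ℝ}
    (hf1 : ContinuousOn f1 (Icc 0 T₀)) (hf2 : ContinuousOn f2 (Icc 0 T₀))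
    (hg : ContinuousOn g (Icc 0 T₀))
    (hr1 : ∀ t ∈ Icc (0:ℝ) T₀, f1 t ∈ Icc 0 C) (hr2 : ∀ t ∈ Icc (0:ℝ) T₀, f2 t ∈ Icc 0 C)
    (hmom : ∀ n : ℕ, ∫ t in (0:ℝ)..T₀, f1 t ^ n * g t = ∫ t in (0:ℝ)..T₀, f2 t ^ n * g t)
    {ψ : ℝ → ℝ} (hψ : Continuous ψ) :
    ∫ t in (0:ℝ)..T₀, ψ (f1 t) * g t = ∫ t in (0:ℝ)..T₀, ψ (f2 t) * g t := by
  set K : ℝ := ∫ t in (0:ℝ)..T₀, |g t| with hK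
  have hKnn : 0 ≤ K := integral_nonneg hT₀.le (fun u _ => abs_nonneg _)
  have hgabs : IntervalIntegrable (fun t => |g t|) volume 0 T₀ := by
    apply ContinuousOn.intervalIntegrable; rw [uIcc_of_le hT₀.le]; exact hg.abs
  rw [← sub_eq_zero, ← abs_nonpos_iff]
  by_contra hcon
  push_neg at hcon
  set D : ℝ := (∫ t in (0:ℝ)..T₀, ψ (f1 t) * g t) - ∫ t in (0:ℝ)..T₀, ψ (f2 t) * g t with hD
  set ε : ℝ := |D| / (2 * K + 2) with hε
  have hεpos : 0 < ε := by positivity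
  obtain ⟨p, hp⟩ := exists_polynomial_near_of_continuousOn 0 C ψ hψ.continuousOn ε hεpos
  -- bound each error term
  have key : ∀ (f : ℝ → ℝ), ContinuousOn f (Icc 0 T₀) → (∀ t ∈ Icc (0:ℝ) T₀, f t ∈ Icc 0 C) →
      |(∫ t in (0:ℝ)..T₀, ψ (f t) * g t) - ∫ t in (0:ℝ)..T₀, p.eval (f t) * g t| ≤ ε * K := by
    intro f hf hr
    have i1 : IntervalIntegrable (fun t => ψ (f t) * g t) volume 0 T₀ :=
      integ_aux hT₀ (hψ.comp_continuousOn hf) hg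
    have i2 : IntervalIntegrable (fun t => p.eval (f t) * g t) volume 0 T₀ :=
      integ_aux hT₀ (p.continuous_aeval.comp_continuousOn hf) hg
    rw [← integral_sub i1 i2]
    have habs : |∫ t in (0:ℝ)..T₀, (ψ (f t) * g t - p.eval (f t) * g t)|
        ≤ ∫ t in (0:ℝ)..T₀, |ψ (f t) * g t - p.eval (f t) * g t| :=
      intervalIntegral.abs_integral_le_integral_abs hT₀.le
    refine habs.trans ?_
    have : (∫ t in (0:ℝ)..T₀, |ψ (f t) * g t - p.eval (f t) * g t|)
        ≤ ∫ t in (0:ℝ)..T₀, ε * |g t| := by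
      apply integral_mono_on hT₀.le ((i1.sub i2).abs) (hgabs.const_mul ε)
      intro u hu
      have : |ψ (f u) * g u - p.eval (f u) * g u| = |ψ (f u) - p.eval (f u)| * |g u| := by
        rw [← sub_mul, abs_mul]
      rw [this]
      apply mul_le_mul_of_nonneg_right _ (abs_nonneg _)
      rw [abs_sub_comm]
      exact (hp _ (hr u hu)).le
    refine this.trans ?_
    rw [intervalIntegral.integral_const_mul]
  have hpoly := poly_mom hT₀ hf1 hf2 hg hmom p
  have : |D| ≤ 2 * (ε * K) := by
    have h1 := key f1 hf1 hr1
    have h2 := key f2 hf2 hr2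
    have : D = ((∫ t in (0:ℝ)..T₀, ψ (f1 t) * g t) - ∫ t in (0:ℝ)..T₀, p.eval (f1 t) * g t)
        - ((∫ t in (0:ℝ)..T₀, ψ (f2 t) * g t) - ∫ t in (0:ℝ)..T₀, p.eval (f2 t) * g t) := by
      rw [hD, hpoly]; ring
    rw [this]
    calc _ ≤ _ := abs_sub _ _
    _ ≤ 2 * (ε * K) := by linarith
  have h2 : 2 * (ε * K) = |D| * (2 * K) / (2 * K + 2) := by rw [hε]; ring
  rw [h2] at this
  have hpos : (0:ℝ) < 2 * K + 2 := by linarith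
  have h3 : |D| * (2 * K + 2) ≤ |D| * (2 * K) := by
    calc |D| * (2 * K + 2) ≤ (|D| * (2 * K) / (2 * K + 2)) * (2 * K + 2) :=
      mul_le_mul_of_nonneg_right this hpos.le
    _ = |D| * (2 * K) := by field_simp
  nlinarith [hcon]

lemma g_nonneg_aux {T₀ : ℝ} (hT₀ : 0 < T₀) {g : ℝ → ℝ}
    (hg : ContinuousOn g (Icc 0 T₀)) (hgpos : ∀ t ∈ Ioo (0:ℝ) T₀, 0 < g t) :
    ∀ t ∈ Icc (0:ℝ) T₀, 0 ≤ g t := by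
  intro t ht
  rcases eq_or_lt_of_le ht.1 with h0 | h0
  · have hcl : (0:ℝ) ∈ closure (Ioo (0:ℝ) T₀) := by
      rw [closure_Ioo hT₀.ne]; exact ⟨le_refl _, hT₀.le⟩
    haveI : (nhdsWithin (0:ℝ) (Ioo (0:ℝ) T₀)).NeBot :=
      mem_closure_iff_nhdsWithin_neBot.mp hcl
    have htend : Filter.Tendsto g (nhdsWithin (0:ℝ) (Ioo (0:ℝ) T₀)) (nhds (g 0)) :=
      (hg 0 (left_mem_Icc.mpr hT₀.le)).mono_left (nhdsWithin_mono _ Ioo_subset_Icc_self)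
    have := ge_of_tendsto htend (eventually_mem_nhdsWithin.mono (fun u hu => (hgpos u hu).le))
    rw [← h0]; exact this
  rcases eq_or_lt_of_le ht.2 with h1 | h1
  · have hcl : T₀ ∈ closure (Ioo (0:ℝ) T₀) := by
      rw [closure_Ioo hT₀.ne]; exact ⟨hT₀.le, le_refl _⟩
    haveI : (nhdsWithin T₀ (Ioo (0:ℝ) T₀)).NeBot :=
      mem_closure_iff_nhdsWithin_neBot.mp hcl
    have htend : Filter.Tendsto g (nhdsWithin T₀ (Ioo (0:ℝ) T₀)) (nhds (g T₀)) :=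
      (hg T₀ (right_mem_Icc.mpr hT₀.le)).mono_left (nhdsWithin_mono _ Ioo_subset_Icc_self)
    have := ge_of_tendsto htend (eventually_mem_nhdsWithin.mono (fun u hu => (hgpos u hu).le))
    rw [h1]; exact this
  · exact (hgpos t ⟨h0, h1⟩).le

lemma mom_le {T₀ : ℝ} (hT₀ : 0 < T₀) {f1 f2 g : ℝ → ℝ}
    (hf1 : ContinuousOn f1 (Icc 0 T₀)) (hf2 : ContinuousOn f2 (Icc 0 T₀))
    (hm1 : MonotoneOn f1 (Icc 0 T₀)) (hm2 : MonotoneOn f2 (Icc 0 T₀))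
    (h10 : f1 0 = 0) (h20 : f2 0 = 0)
    (hg : ContinuousOn g (Icc 0 T₀)) (hgpos : ∀ t ∈ Ioo (0:ℝ) T₀, 0 < g t)
    (hmom : ∀ n : ℕ, ∫ t in (0:ℝ)..T₀, f1 t ^ n * g t = ∫ t in (0:ℝ)..T₀, f2 t ^ n * g t) :
    ∀ t ∈ Icc (0:ℝ) T₀, f1 t ≤ f2 t := by
  have h0mem : (0:ℝ) ∈ Icc (0:ℝ) T₀ := left_mem_Icc.mpr hT₀.le
  have hTmem : T₀ ∈ Icc (0:ℝ) T₀ := right_mem_Icc.mpr hT₀.le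
  have hgnn := g_nonneg_aux hT₀ hg hgpos
  by_contra hcon
  push_neg at hcon
  obtain ⟨t₀, ht₀, hlt⟩ := hcon
  -- t₀ > 0
  have ht₀pos : 0 < t₀ := by
    rcases eq_or_lt_of_le ht₀.1 with h | h
    · exfalso; rw [← h, h10, h20] at hlt; exact lt_irrefl _ hlt
    · exact h
  set s : ℝ := f2 t₀ with hs
  set δ : ℝ := f1 t₀ - f2 t₀ with hδdef
  have hδ : 0 < δ := sub_pos.mpr hlt
  set ψ : ℝ → ℝ := fun x => min 1 (max 0 ((x - (s + δ/3)) * (3/δ))) with hψdef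
  have hψc : Continuous ψ := by
    apply Continuous.min continuous_const
    apply Continuous.max continuous_const
    continuity
  have hψ0 : ∀ x ≤ s + δ/3, ψ x = 0 := by
    intro x hx
    have : (x - (s + δ/3)) * (3/δ) ≤ 0 :=
      mul_nonpos_of_nonpos_of_nonneg (by linarith) (by positivity)
    simp only [hψdef]
    rw [max_eq_left this, min_eq_right zero_le_one]
  have hψ1 : ∀ x, s + 2*δ/3 ≤ x → ψ x = 1 := by
    intro x hx
    have h1 : (1:ℝ) ≤ (x - (s + δ/3)) * (3/δ) := by
      rw [← div_le_iff₀ (by positivity : (0:ℝ) < 3/δ)] at *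
      have : (1:ℝ) / (3/δ) = δ/3 := by field_simp
      rw [this]; linarith
    simp only [hψdef]
    exact min_eq_left (le_trans h1 (le_max_right _ _))
  have hψle1 : ∀ x, ψ x ≤ 1 := fun x => min_le_left _ _
  have hψnn : ∀ x, 0 ≤ ψ x := fun x => le_min zero_le_one (le_max_left _ _)
  set h : ℝ → ℝ := fun t => (ψ (f1 t) - ψ (f2 t)) * g t with hhdef
  -- pointwise nonnegativity
  have hnn : ∀ t ∈ Icc (0:ℝ) T₀, 0 ≤ h t := by
    intro t ht
    apply mul_nonneg _ (hgnn t ht)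
    rcases le_total t t₀ with hle | hle
    · have : ψ (f2 t) = 0 := hψ0 _ (le_trans (hm2 ht ht₀ hle) (by linarith))
      rw [this]; simpa using hψnn (f1 t)
    · have : ψ (f1 t) = 1 := hψ1 _ (by
        have := hm1 ht₀ ht hle
        have hft₀ : f1 t₀ = s + δ := by rw [hδdef, hs]; ring
        linarith)
      rw [this]; linarith [hψle1 (f2 t)]
  -- a small interval (c, t₀) on which h = g > 0
  have hft₀1 : s + 2*δ/3 < f1 t₀ := by rw [hs, hδdef]; linarith
  have hft₀2 : f2 t₀ < s + δ/3 := by rw [hs]; linarith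
  have hsub : Ioo 0 t₀ ⊆ Icc (0:ℝ) T₀ := fun u hu => ⟨hu.1.le, le_trans hu.2.le ht₀.2⟩
  have hev : ∀ᶠ u in nhdsWithin t₀ (Ioo 0 t₀),
      s + 2*δ/3 < f1 u ∧ f2 u < s + δ/3 := by
    have ht1 : Filter.Tendsto f1 (nhdsWithin t₀ (Ioo 0 t₀)) (nhds (f1 t₀)) :=
      (hf1 t₀ ht₀).mono_left (nhdsWithin_mono _ hsub)
    have ht2 : Filter.Tendsto f2 (nhdsWithin t₀ (Ioo 0 t₀)) (nhds (f2 t₀)) :=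
      (hf2 t₀ ht₀).mono_left (nhdsWithin_mono _ hsub)
    exact (ht1.eventually (eventually_gt_nhds hft₀1)).and
      (ht2.eventually (eventually_lt_nhds hft₀2))
  rw [Filter.eventually_iff, mem_nhdsWithin] at hev
  obtain ⟨U, hUopen, hUt₀, hU⟩ := hev
  obtain ⟨ε, hεpos, hball⟩ := Metric.isOpen_iff.mp hUopen t₀ hUt₀
  set c : ℝ := max (t₀ - ε/2) (t₀ / 2) with hc
  have hc0 : 0 < c := lt_of_lt_of_le (by linarith) (le_max_right _ _)
  have hct₀ : c < t₀ := max_lt (by linarith) (by linarith)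
  have hcT : c ≤ T₀ := le_trans hct₀.le ht₀.2
  have hIoo : ∀ u ∈ Ioo c t₀, (s + 2*δ/3 < f1 u ∧ f2 u < s + δ/3) := by
    intro u hu
    apply hU
    constructor
    · apply hball
      rw [Metric.mem_ball, Real.dist_eq, abs_lt]
      constructor
      · have : t₀ - ε/2 ≤ c := le_max_left _ _
        linarith [hu.1, hu.2]
      · linarith [hu.1, hu.2]
    · exact ⟨lt_of_le_of_lt (by linarith [le_max_right (t₀ - ε/2) (t₀/2)] : (0:ℝ) ≤ c) hu.1, hu.2⟩
  -- continuity / integrability of h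
  have hhcont : ContinuousOn h (Icc 0 T₀) :=
    ((hψc.comp_continuousOn hf1).sub (hψc.comp_continuousOn hf2)).mul hg
  have hint : ∀ x y : ℝ, x ∈ Icc (0:ℝ) T₀ → y ∈ Icc (0:ℝ) T₀ →
      IntervalIntegrable h volume x y := by
    intro x y hx hy
    apply ContinuousOn.intervalIntegrable
    apply hhcont.mono
    intro u hu
    rcases le_total x y with hxy | hxy
    · rw [uIcc_of_le hxy] at hu; exact ⟨le_trans hx.1 hu.1, le_trans hu.2 hy.2⟩
    · rw [uIcc_of_ge hxy] at hu; exact ⟨le_trans hy.1 hu.1, le_trans hu.2 hx.2⟩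
  -- the total integral is zero
  have hzero : ∫ t in (0:ℝ)..T₀, h t = 0 := by
    set C : ℝ := max (f1 T₀) (f2 T₀) with hC
    have hr1 : ∀ t ∈ Icc (0:ℝ) T₀, f1 t ∈ Icc 0 C := fun t ht =>
      ⟨h10 ▸ hm1 h0mem ht ht.1, le_trans (hm1 ht hTmem ht.2) (le_max_left _ _)⟩
    have hr2 : ∀ t ∈ Icc (0:ℝ) T₀, f2 t ∈ Icc 0 C := fun t ht =>
      ⟨h20 ▸ hm2 h0mem ht ht.1, le_trans (hm2 ht hTmem ht.2) (le_max_right _ _)⟩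
    have key := cont_mom hT₀ hf1 hf2 hg hr1 hr2 hmom hψc
    have i1 : IntervalIntegrable (fun t => ψ (f1 t) * g t) volume 0 T₀ :=
      integ_aux hT₀ (hψc.comp_continuousOn hf1) hg
    have i2 : IntervalIntegrable (fun t => ψ (f2 t) * g t) volume 0 T₀ :=
      integ_aux hT₀ (hψc.comp_continuousOn hf2) hg
    have : ∫ t in (0:ℝ)..T₀, h t
        = (∫ t in (0:ℝ)..T₀, ψ (f1 t) * g t) - ∫ t in (0:ℝ)..T₀, ψ (f2 t) * g t := by
      rw [← integral_sub i1 i2]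
      apply intervalIntegral.integral_congr
      intro u _
      simp only [hhdef]; ring
    rw [this, key, sub_self]
  -- but the integral is positive
  have hsplit : ∫ t in (0:ℝ)..T₀, h t
      = (∫ t in (0:ℝ)..c, h t) + (∫ t in c..t₀, h t) + (∫ t in t₀..T₀, h t) := by
    rw [integral_add_adjacent_intervals (hint 0 c h0mem ⟨hc0.le, hcT⟩)
        (hint c t₀ ⟨hc0.le, hcT⟩ ht₀),
      integral_add_adjacent_intervals (hint 0 t₀ h0mem ht₀) (hint t₀ T₀ ht₀ hTmem)]
  have hpos1 : 0 ≤ ∫ t in (0:ℝ)..c, h t :=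
    intervalIntegral.integral_nonneg hc0.le
      (fun u hu => hnn u ⟨hu.1, le_trans hu.2 hcT⟩)
  have hpos3 : 0 ≤ ∫ t in t₀..T₀, h t :=
    intervalIntegral.integral_nonneg ht₀.2
      (fun u hu => hnn u ⟨le_trans ht₀.1 hu.1, hu.2⟩)
  have hpos2 : 0 < ∫ t in c..t₀, h t := by
    apply intervalIntegral.intervalIntegral_pos_of_pos_on (hint c t₀ ⟨hc0.le, hcT⟩ ht₀)
      _ hct₀
    intro u hu
    obtain ⟨hu1, hu2⟩ := hIoo u hu
    have e1 : ψ (f1 u) = 1 := hψ1 _ hu1.le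
    have e2 : ψ (f2 u) = 0 := hψ0 _ hu2.le
    have : h u = g u := by simp only [hhdef]; rw [e1, e2]; ring
    rw [this]
    exact hgpos u ⟨lt_trans hc0 hu.1, lt_of_lt_of_le hu.2 ht₀.2⟩
  rw [hsplit] at hzero
  linarith

/-- Uniqueness of the orbit (Theorem 4.2): two C¹ orbits starting at the origin
with componentwise speed `< 1` whose moments against `g` agree in each coordinate
direction must coincide on `[0, T₀]`. -/
theorem orbit_uniqueness (T₀ : ℝ) (hT₀ : 0 < T₀)
    (a b : ℝ → Fin 3 → ℝ) (a' b' : ℝ → Fin 3 → ℝ)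
    (ha : ∀ j : Fin 3, ∀ t ∈ Set.Icc (0:ℝ) T₀, HasDerivAt (fun s => a s j) (a' t j) t)
    (hb : ∀ j : Fin 3, ∀ t ∈ Set.Icc (0:ℝ) T₀, HasDerivAt (fun s => b s j) (b' t j) t)
    (ha'c : ∀ j : Fin 3, ContinuousOn (fun t => a' t j) (Set.Icc 0 T₀))
    (hb'c : ∀ j : Fin 3, ContinuousOn (fun t => b' t j) (Set.Icc 0 T₀))
    (ha0 : a 0 = 0) (hb0 : b 0 = 0)
    (ha' : ∀ j : Fin 3, ∀ t ∈ Set.Icc (0:ℝ) T₀, |a' t j| < 1)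
    (hb' : ∀ j : Fin 3, ∀ t ∈ Set.Icc (0:ℝ) T₀, |b' t j| < 1)
    (g : ℝ → ℝ) (hg : ContinuousOn g (Set.Icc 0 T₀))
    (hgpos : ∀ t ∈ Set.Ioo (0:ℝ) T₀, 0 < g t)
    (hmom : ∀ j : Fin 3, ∀ n : ℕ,
      ∫ t in (0:ℝ)..T₀, (a t j + t) ^ n * g t = ∫ t in (0:ℝ)..T₀, (b t j + t) ^ n * g t) :
    ∀ t ∈ Set.Icc (0:ℝ) T₀, a t = b t := by
  -- helper: for a component function with |derivative| < 1, f s := (comp s) + s is monotone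
  have main : ∀ (c : ℝ → Fin 3 → ℝ) (c' : ℝ → Fin 3 → ℝ) (j : Fin 3),
      (∀ t ∈ Set.Icc (0:ℝ) T₀, HasDerivAt (fun s => c s j) (c' t j) t) →
      (∀ t ∈ Set.Icc (0:ℝ) T₀, |c' t j| < 1) →
      ContinuousOn (fun t => c t j + t) (Icc 0 T₀) ∧
      MonotoneOn (fun t => c t j + t) (Icc 0 T₀) := by
    intro c c' j hc hc'
    have hcont : ContinuousOn (fun t => c t j + t) (Icc 0 T₀) := by
      apply ContinuousOn.add _ continuous_id.continuousOn
      exact fun t ht => (hc t ht).continuousAt.continuousWithinAt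
    refine ⟨hcont, ?_⟩
    apply StrictMonoOn.monotoneOn
    apply strictMonoOn_of_deriv_pos (convex_Icc 0 T₀) hcont
    intro x hx
    rw [interior_Icc] at hx
    have hxI : x ∈ Icc (0:ℝ) T₀ := Ioo_subset_Icc_self hx
    have hd : HasDerivAt (fun t => c t j + t) (c' x j + 1) x :=
      (hc x hxI).add (hasDerivAt_id x)
    rw [hd.deriv]
    have := abs_lt.mp (hc' x hxI)
    linarith [this.1]
  intro t ht
  funext j
  obtain ⟨hcont1, hmono1⟩ := main a a' j (ha j) (ha' j)
  obtain ⟨hcont2, hmono2⟩ := main b b' j (hb j) (hb' j)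
  have h10 : a 0 j + 0 = 0 := by rw [ha0]; simp
  have h20 : b 0 j + 0 = 0 := by rw [hb0]; simp
  have hle1 := mom_le hT₀ hcont1 hcont2 hmono1 hmono2 h10 h20 hg hgpos (hmom j) t ht
  have hle2 := mom_le hT₀ hcont2 hcont1 hmono2 hmono1 h20 h10 hg hgpos
    (fun n => (hmom j n).symm) t ht
  linarith
end
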